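/- For all integers k ≥ 0 and a ≥ 0, in K[B] one has B_odd^{(2k+1)} · B_odd^{(2a+1)} = [2k+2a+2 choose 2k+1] · ( B_odd^{(2k+2a+2)} + Σ_{ℓ=1}^{k+1} C_ℓ · (qς)^{ℓ} · B_odd^{(2k+2a−2ℓ+2)} ), where C_ℓ = ( [2k+2a−2ℓ+2]·[2k−2ℓ+2]·[2a−2ℓ+2] + [2k+2a−2ℓ+3]²·[2ℓ] ) / ( [2k+2a+2]·[2k+2] ) · ( ∏_{m=1}^{ℓ−1} [2a−2m+2] ) · ∏_{m=1}^{ℓ} [2k−2m+4] / ( [2k+2a−2m+3]·[2m] ). (Whenever [2a−2ℓ+2] ≠ 0 this coefficient C_ℓ equals the equivalent form ( [2k+2a−2ℓ+2][2k−2ℓ+2]/([2k+2a+2][2k+2]) + [2k+2a−2ℓ+3]²[2ℓ]/([2k+2a+2][2a−2ℓ+2][2k+2]) ) · ∏_{m=1}^{ℓ} [2a−2m+2][2k−2m+4]/([2k+2a−2m+3][2m]).) -/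

import Mathlib

noncomputable section

open Polynomial Finset

abbrev Kq : Type := RatFunc ℚ

/-- The variable `q` in `ℚ(q)`. -/
def qq : Kq := RatFunc.X

/-- The quantum integer `[n] = (q^n - q^{-n})/(q - q^{-1})` for `n : ℤ`. -/
def qint (n : ℤ) : Kq := (qq ^ n - qq ^ (-n)) / (qq - qq⁻¹)

/-- The quantum factorial `[n]! = ∏_{i=1}^n [i]`. -/
def qfact (n : ℕ) : Kq := ∏ i ∈ Finset.range n, qint ((i : ℤ) + 1)

/-- The quantum binomial `[n choose m] = [n]!/([m]!·[n-m]!)`. -/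
def qbinom (n m : ℕ) : Kq := qfact n / (qfact m * qfact (n - m))

/-- The even ı-divided power `B_ev^{(n)}` in `K[B]`. -/
def BevP (ς : Kq) (n : ℕ) : Polynomial Kq :=
  if Even n then
    Polynomial.C (qfact n)⁻¹ *
      ∏ j ∈ Finset.range (n / 2),
        ((Polynomial.X : Polynomial Kq) ^ 2 - Polynomial.C (qq * ς * (qint (2 * (j : ℤ))) ^ 2))
  else
    Polynomial.C (qfact n)⁻¹ *
      (Polynomial.X *
        ∏ j ∈ Finset.range (n / 2),
          ((Polynomial.X : Polynomial Kq) ^ 2 - Polynomial.C (qq * ς * (qint (2 * (j : ℤ) + 2)) ^ 2)))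

/-- The odd ı-divided power `B_odd^{(n)}` in `K[B]`. -/
def BoddP (ς : Kq) (n : ℕ) : Polynomial Kq :=
  if Even n then
    Polynomial.C (qfact n)⁻¹ *
      ∏ j ∈ Finset.range (n / 2),
        ((Polynomial.X : Polynomial Kq) ^ 2 - Polynomial.C (qq * ς * (qint (2 * (j : ℤ) + 1)) ^ 2))
  else
    Polynomial.C (qfact n)⁻¹ *
      (Polynomial.X *
        ∏ j ∈ Finset.range (n / 2),
          ((Polynomial.X : Polynomial Kq) ^ 2 - Polynomial.C (qq * ς * (qint (2 * (j : ℤ) + 1)) ^ 2)))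

lemma qq_ne_zero : qq ≠ 0 := RatFunc.X_ne_zero

lemma qq_pow_ne_one {n : ℕ} (hn : n ≠ 0) : qq ^ n ≠ 1 := by
  intro h
  have h1 : algebraMap (Polynomial ℚ) Kq (Polynomial.X ^ n) = algebraMap (Polynomial ℚ) Kq 1 := by
    rw [map_pow, map_one, RatFunc.algebraMap_X]; exact h
  have h2 := IsFractionRing.injective (Polynomial ℚ) Kq h1
  have h3 := congrArg Polynomial.natDegree h2
  simp [Polynomial.natDegree_X_pow] at h3
  exact hn h3

lemma qq_zpow_ne_one {n : ℤ} (hn : n ≠ 0) : qq ^ n ≠ 1 := by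
  rcases lt_or_gt_of_ne hn with h | h
  · intro he
    have h2 : qq ^ (-n) = 1 := by rw [zpow_neg, he, inv_one]
    rw [show (-n) = ((-n).toNat : ℤ) by omega, zpow_natCast] at h2
    exact qq_pow_ne_one (by omega) h2
  · intro he
    rw [show n = (n.toNat : ℤ) by omega, zpow_natCast] at he
    exact qq_pow_ne_one (by omega) he

lemma qden_ne_zero : qq - qq⁻¹ ≠ 0 := by
  intro h
  apply qq_zpow_ne_one (n := 2) (by norm_num)
  have h1 : qq = qq⁻¹ := sub_eq_zero.mp h
  have h2 : qq * qq = 1 := by nth_rewrite 2 [h1]; exact mul_inv_cancel₀ qq_ne_zero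
  rw [show (2:ℤ) = 1 + 1 by norm_num, zpow_add₀ qq_ne_zero, zpow_one]; exact h2

lemma qint_ne_zero {n : ℤ} (hn : n ≠ 0) : qint n ≠ 0 := by
  unfold qint
  apply div_ne_zero _ qden_ne_zero
  intro h
  have h1 := sub_eq_zero.mp h
  have h2 : qq ^ n * qq ^ n = qq ^ (-n) * qq ^ n := by rw [h1]
  rw [← zpow_add₀ qq_ne_zero, ← zpow_add₀ qq_ne_zero, neg_add_cancel, zpow_zero] at h2
  exact qq_zpow_ne_one (by omega) h2

lemma qint_zero : qint 0 = 0 := by simp [qint]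

lemma qfact_ne_zero (n : ℕ) : qfact n ≠ 0 := by
  unfold qfact
  apply Finset.prod_ne_zero_iff.mpr
  intro i _
  exact qint_ne_zero (by omega)

private lemma aux_field (a b c : Kq) (ha : a ≠ 0) (hb : b ≠ 0) (hc : c ≠ 0) :
    (a - a⁻¹) * (b - b⁻¹) - (a / c - c / a) * (b / c - c / b) =
      (c - c⁻¹) * (a * b / c - c / (a * b)) := by
  field_simp
  ring

/-- The key quantum-integer identity `[x][y] - [x-t][y-t] = [t][x+y-t]`. -/
lemma qint_key (x y t : ℤ) :
    qint x * qint y - qint (x - t) * qint (y - t) = qint t * qint (x + y - t) := by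
  unfold qint
  have hq := qq_ne_zero
  have e1 : qq ^ (x - t) = qq ^ x / qq ^ t := by rw [zpow_sub₀ hq]
  have e2 : qq ^ (y - t) = qq ^ y / qq ^ t := by rw [zpow_sub₀ hq]
  have e3 : qq ^ (x + y - t) = qq ^ x * qq ^ y / qq ^ t := by
    rw [zpow_sub₀ hq, zpow_add₀ hq]
  have e4 : qq ^ (-(x - t)) = qq ^ t / qq ^ x := by rw [neg_sub, zpow_sub₀ hq]
  have e5 : qq ^ (-(y - t)) = qq ^ t / qq ^ y := by rw [neg_sub, zpow_sub₀ hq]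
  have e6 : qq ^ (-(x + y - t)) = qq ^ t / (qq ^ x * qq ^ y) := by
    rw [neg_sub, zpow_sub₀ hq, zpow_add₀ hq]
  have e7 : qq ^ (-x) = (qq ^ x)⁻¹ := by rw [zpow_neg]
  have e8 : qq ^ (-y) = (qq ^ y)⁻¹ := by rw [zpow_neg]
  have e9 : qq ^ (-t) = (qq ^ t)⁻¹ := by rw [zpow_neg]
  rw [e1, e2, e3, e4, e5, e6, e7, e8, e9]
  rw [div_mul_div_comm, div_mul_div_comm, div_mul_div_comm, div_sub_div_same]
  congr 1
  exact aux_field _ _ _ (zpow_ne_zero _ hq) (zpow_ne_zero _ hq) (zpow_ne_zero _ hq)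

lemma qint_key' (x y t x' y' s : ℤ) (h1 : x' = x - t) (h2 : y' = y - t) (h3 : s = x + y - t) :
    qint x * qint y - qint x' * qint y' = qint t * qint s := by
  subst h1; subst h2; subst h3; exact qint_key x y t

/-- The product `∏_{j=1}^n (B² - qς[2j-1]²)`. -/
def bb (ς : Kq) (n : ℕ) : Polynomial Kq :=
  ∏ j ∈ Finset.range n,
    ((Polynomial.X : Polynomial Kq) ^ 2 - Polynomial.C (qq * ς * (qint (2 * (j : ℤ) + 1)) ^ 2))

def Np (k a n : ℕ) : Kq :=
  ∏ j ∈ Finset.range n, qint (2 * (k : ℤ) - 2 * (j : ℤ)) * qint (2 * (k : ℤ) + 2 * (a : ℤ) - 2 * (j : ℤ))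

def Pa (a n : ℕ) : Kq := ∏ j ∈ Finset.range n, qint (2 * (a : ℤ) - 2 * (j : ℤ))

def Mm (n : ℕ) : Kq := ∏ j ∈ Finset.range n, qint (2 * (j : ℤ) + 2)

def dd (k a n : ℕ) : Kq := Pa a n * Np k a n / Mm n

lemma Mm_ne_zero (n : ℕ) : Mm n ≠ 0 := by
  unfold Mm
  apply Finset.prod_ne_zero_iff.mpr
  intro i _
  exact qint_ne_zero (by omega)

lemma dd_zero (k a : ℕ) : dd k a 0 = 1 := by simp [dd, Pa, Np, Mm]

lemma Np_top_zero (k a : ℕ) : Np k a (k + 1) = 0 := by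
  unfold Np
  apply Finset.prod_eq_zero (Finset.self_mem_range_succ k)
  have h : 2 * (k : ℤ) - 2 * (k : ℤ) = 0 := by ring
  rw [h, qint_zero, zero_mul]

lemma dd_top_zero (k a : ℕ) : dd k a (k + 1) = 0 := by
  rw [dd, Np_top_zero, mul_zero, zero_div]

lemma Np_shift (k a ℓ : ℕ) :
    Np (k + 1) a (ℓ + 1) = qint (2 * (k : ℤ) + 2) * qint (2 * (k : ℤ) + 2 * (a : ℤ) + 2) * Np k a ℓ := by
  unfold Np
  rw [Finset.prod_range_succ', mul_comm]
  congr 1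
  · congr 1 <;> · congr 1; try push_cast; try ring
  · refine Finset.prod_congr rfl fun j _ => ?_
    congr 1 <;> · congr 1; try push_cast; try ring

lemma dd_rec (k a ℓ : ℕ) :
    dd (k + 1) a (ℓ + 1) = dd k a (ℓ + 1) +
      qint (2 * (a : ℤ) - 2 * (ℓ : ℤ)) * qint (4 * (k : ℤ) + 2 * (a : ℤ) - 2 * (ℓ : ℤ) + 2) *
        dd k a ℓ := by
  unfold dd
  have hPa1 : Pa a (ℓ + 1) = Pa a ℓ * qint (2 * (a : ℤ) - 2 * (ℓ : ℤ)) := Finset.prod_range_succ _ _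
  have hNp1 : Np k a (ℓ + 1) =
      Np k a ℓ * (qint (2 * (k : ℤ) - 2 * (ℓ : ℤ)) * qint (2 * (k : ℤ) + 2 * (a : ℤ) - 2 * (ℓ : ℤ))) :=
    Finset.prod_range_succ _ _
  have hMm1 : Mm (ℓ + 1) = Mm ℓ * qint (2 * (ℓ : ℤ) + 2) := Finset.prod_range_succ _ _
  rw [hPa1, hNp1, hMm1, Np_shift]
  have hM : Mm ℓ ≠ 0 := Mm_ne_zero ℓ
  have h4 : qint (2 * (ℓ : ℤ) + 2) ≠ 0 := qint_ne_zero (by omega)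
  have key : qint (2 * (k : ℤ) + 2) * qint (2 * (k : ℤ) + 2 * (a : ℤ) + 2) -
      qint (2 * (k : ℤ) - 2 * (ℓ : ℤ)) * qint (2 * (k : ℤ) + 2 * (a : ℤ) - 2 * (ℓ : ℤ)) =
      qint (2 * (ℓ : ℤ) + 2) * qint (4 * (k : ℤ) + 2 * (a : ℤ) - 2 * (ℓ : ℤ) + 2) :=
    qint_key' _ _ _ _ _ _ (by ring) (by ring) (by ring)
  set P := Pa a ℓ
  set N := Np k a ℓ
  set M := Mm ℓ
  set q1 := qint (2 * (a : ℤ) - 2 * (ℓ : ℤ))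
  set q2 := qint (2 * (k : ℤ) + 2)
  set q3 := qint (2 * (k : ℤ) + 2 * (a : ℤ) + 2)
  set q4 := qint (2 * (ℓ : ℤ) + 2)
  set q5 := qint (2 * (k : ℤ) - 2 * (ℓ : ℤ))
  set q6 := qint (2 * (k : ℤ) + 2 * (a : ℤ) - 2 * (ℓ : ℤ))
  set q7 := qint (4 * (k : ℤ) + 2 * (a : ℤ) - 2 * (ℓ : ℤ) + 2)
  have expand : P * q1 * (q2 * q3 * N) = P * q1 * (N * (q5 * q6)) + q1 * q7 * (P * N) * q4 := by
    linear_combination P * q1 * N * key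
  rw [expand, add_div]
  congr 1
  rw [mul_comm M q4, ← div_div, mul_div_cancel_right₀ _ h4, mul_div_assoc]

lemma bb_succ (ς : Kq) (n : ℕ) :
    bb ς (n + 1) = bb ς n *
      ((Polynomial.X : Polynomial Kq) ^ 2 - Polynomial.C (qq * ς * (qint (2 * (n : ℤ) + 1)) ^ 2)) :=
  Finset.prod_range_succ _ _

/-- Expansion of `b_k b_a` in the basis `b_n`. -/
lemma bb_expand (ς : Kq) (a k : ℕ) :
    bb ς k * bb ς a =
      ∑ ℓ ∈ Finset.range (k + 1),
        Polynomial.C ((qq * ς) ^ ℓ * dd k a ℓ) * bb ς (k + a - ℓ) := by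
  induction k with
  | zero =>
    rw [Finset.sum_range_one]
    simp [bb, dd_zero]
  | succ k ih =>
    rw [bb_succ, mul_right_comm, ih, Finset.sum_mul]
    have step : ∀ ℓ ∈ Finset.range (k + 1),
        Polynomial.C ((qq * ς) ^ ℓ * dd k a ℓ) * bb ς (k + a - ℓ) *
            ((Polynomial.X : Polynomial Kq) ^ 2 -
              Polynomial.C (qq * ς * (qint (2 * (k : ℤ) + 1)) ^ 2)) =
          Polynomial.C ((qq * ς) ^ ℓ * dd k a ℓ) * bb ς (k + 1 + a - ℓ) +
            Polynomial.C ((qq * ς) ^ (ℓ + 1) *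
                (qint (2 * (a : ℤ) - 2 * (ℓ : ℤ)) *
                  qint (4 * (k : ℤ) + 2 * (a : ℤ) - 2 * (ℓ : ℤ) + 2)) * dd k a ℓ) *
              bb ς (k + a - ℓ) := by
      intro ℓ hℓ
      have hℓk : ℓ ≤ k := Nat.lt_succ_iff.mp (Finset.mem_range.mp hℓ)
      have hcast : ((k + a - ℓ : ℕ) : ℤ) = (k : ℤ) + (a : ℤ) - (ℓ : ℤ) := by
        have : ℓ ≤ k + a := by omega
        push_cast [this]
        ring
      have e1 : bb ς (k + a - ℓ + 1) = bb ς (k + a - ℓ) *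
          ((Polynomial.X : Polynomial Kq) ^ 2 -
            Polynomial.C (qq * ς * (qint (2 * ((k : ℤ) + (a : ℤ) - (ℓ : ℤ)) + 1)) ^ 2)) := by
        rw [bb_succ, hcast]
      have key : (qint (2 * ((k : ℤ) + (a : ℤ) - (ℓ : ℤ)) + 1)) ^ 2 -
          (qint (2 * (k : ℤ) + 1)) ^ 2 =
          qint (2 * (a : ℤ) - 2 * (ℓ : ℤ)) *
            qint (4 * (k : ℤ) + 2 * (a : ℤ) - 2 * (ℓ : ℤ) + 2) := by
        have h := qint_key' (2 * ((k : ℤ) + (a : ℤ) - (ℓ : ℤ)) + 1)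
          (2 * ((k : ℤ) + (a : ℤ) - (ℓ : ℤ)) + 1) (2 * (a : ℤ) - 2 * (ℓ : ℤ))
          (2 * (k : ℤ) + 1) (2 * (k : ℤ) + 1)
          (4 * (k : ℤ) + 2 * (a : ℤ) - 2 * (ℓ : ℤ) + 2) (by ring) (by ring) (by ring)
        linear_combination h
      have hC : Polynomial.C ((qq * ς) ^ (ℓ + 1) *
          (qint (2 * (a : ℤ) - 2 * (ℓ : ℤ)) *
            qint (4 * (k : ℤ) + 2 * (a : ℤ) - 2 * (ℓ : ℤ) + 2)) * dd k a ℓ) =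
          Polynomial.C ((qq * ς) ^ ℓ * dd k a ℓ) *
            (Polynomial.C (qq * ς * (qint (2 * ((k : ℤ) + (a : ℤ) - (ℓ : ℤ)) + 1)) ^ 2) -
              Polynomial.C (qq * ς * (qint (2 * (k : ℤ) + 1)) ^ 2)) := by
        rw [← Polynomial.C_sub, ← Polynomial.C_mul]
        congr 1
        linear_combination (-((qq * ς) ^ (ℓ + 1) * dd k a ℓ)) * key
      rw [show k + 1 + a - ℓ = k + a - ℓ + 1 from by omega, e1]
      linear_combination (-(bb ς (k + a - ℓ))) * hC
    rw [Finset.sum_congr rfl step, Finset.sum_add_distrib]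
    have hA : ∑ ℓ ∈ Finset.range (k + 1),
        Polynomial.C ((qq * ς) ^ ℓ * dd k a ℓ) * bb ς (k + 1 + a - ℓ) =
        ∑ ℓ ∈ Finset.range (k + 2),
        Polynomial.C ((qq * ς) ^ ℓ * dd k a ℓ) * bb ς (k + 1 + a - ℓ) := by
      rw [Finset.sum_range_succ (n := k + 1), dd_top_zero]
      simp
    rw [hA, Finset.sum_range_succ' _ (k + 1), Finset.sum_range_succ'
      (fun ℓ => Polynomial.C ((qq * ς) ^ ℓ * dd (k + 1) a ℓ) * bb ς (k + 1 + a - ℓ)) (k + 1)]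
    rw [add_right_comm]
    refine congrArg₂ (· + ·) ?_ ?_
    swap
    · simp [dd_zero]
    rw [← Finset.sum_add_distrib]
    refine Finset.sum_congr rfl fun ℓ hℓ => ?_
    rw [show k + 1 + a - (ℓ + 1) = k + a - ℓ from by omega, dd_rec]
    rw [← add_mul, ← Polynomial.C_add]
    congr 2
    push_cast
    ring

/-- Master expansion of `X² b_k b_a`. -/
lemma bb_master (ς : Kq) (k a : ℕ) :
    (Polynomial.X : Polynomial Kq) ^ 2 * (bb ς k * bb ς a) =
      bb ς (k + a + 1) +
        ∑ ℓ ∈ Finset.range (k + 1),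
          Polynomial.C ((qq * ς) ^ (ℓ + 1) *
              (dd k a (ℓ + 1) +
                qint (2 * (k : ℤ) + 2 * (a : ℤ) - 2 * (ℓ : ℤ) + 1) ^ 2 * dd k a ℓ)) *
            bb ς (k + a - ℓ) := by
  rw [bb_expand, Finset.mul_sum]
  have step : ∀ ℓ ∈ Finset.range (k + 1),
      (Polynomial.X : Polynomial Kq) ^ 2 *
          (Polynomial.C ((qq * ς) ^ ℓ * dd k a ℓ) * bb ς (k + a - ℓ)) =
        Polynomial.C ((qq * ς) ^ ℓ * dd k a ℓ) * bb ς (k + a + 1 - ℓ) +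
          Polynomial.C ((qq * ς) ^ (ℓ + 1) *
              (qint (2 * (k : ℤ) + 2 * (a : ℤ) - 2 * (ℓ : ℤ) + 1) ^ 2 * dd k a ℓ)) *
            bb ς (k + a - ℓ) := by
    intro ℓ hℓ
    have hℓk : ℓ ≤ k := Nat.lt_succ_iff.mp (Finset.mem_range.mp hℓ)
    have hcast : ((k + a - ℓ : ℕ) : ℤ) = (k : ℤ) + (a : ℤ) - (ℓ : ℤ) := by omega
    have harg : qint (2 * ((k : ℤ) + (a : ℤ) - (ℓ : ℤ)) + 1) =
        qint (2 * (k : ℤ) + 2 * (a : ℤ) - 2 * (ℓ : ℤ) + 1) := by congr 1; ring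
    have e1 : bb ς (k + a + 1 - ℓ) = bb ς (k + a - ℓ) *
        ((Polynomial.X : Polynomial Kq) ^ 2 -
          Polynomial.C (qq * ς * (qint (2 * (k : ℤ) + 2 * (a : ℤ) - 2 * (ℓ : ℤ) + 1)) ^ 2)) := by
      rw [show k + a + 1 - ℓ = k + a - ℓ + 1 from by omega, bb_succ, hcast, harg]
    have hC : Polynomial.C ((qq * ς) ^ (ℓ + 1) *
        (qint (2 * (k : ℤ) + 2 * (a : ℤ) - 2 * (ℓ : ℤ) + 1) ^ 2 * dd k a ℓ)) =
        Polynomial.C ((qq * ς) ^ ℓ * dd k a ℓ) *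
          Polynomial.C (qq * ς * (qint (2 * (k : ℤ) + 2 * (a : ℤ) - 2 * (ℓ : ℤ) + 1)) ^ 2) := by
      rw [← Polynomial.C_mul]; congr 1; ring
    rw [e1, hC]
    ring
  rw [Finset.sum_congr rfl step, Finset.sum_add_distrib]
  have hA : ∑ ℓ ∈ Finset.range (k + 1),
      Polynomial.C ((qq * ς) ^ ℓ * dd k a ℓ) * bb ς (k + a + 1 - ℓ) =
      ∑ ℓ ∈ Finset.range (k + 2),
      Polynomial.C ((qq * ς) ^ ℓ * dd k a ℓ) * bb ς (k + a + 1 - ℓ) := by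
    rw [Finset.sum_range_succ (n := k + 1), dd_top_zero]
    simp
  rw [hA, Finset.sum_range_succ'
    (fun ℓ => Polynomial.C ((qq * ς) ^ ℓ * dd k a ℓ) * bb ς (k + a + 1 - ℓ)) (k + 1)]
  rw [add_right_comm, add_comm]
  refine congrArg₂ (· + ·) ?_ ?_
  · simp [dd_zero]
  · rw [← Finset.sum_add_distrib]
    refine Finset.sum_congr rfl fun ℓ hℓ => ?_
    rw [show k + a + 1 - (ℓ + 1) = k + a - ℓ from by omega, ← add_mul, ← Polynomial.C_add]
    congr 2
    ring

def Xk (k n : ℕ) : Kq := ∏ j ∈ Finset.range n, qint (2 * (k : ℤ) - 2 * (j : ℤ))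
def Xka (k a n : ℕ) : Kq := ∏ j ∈ Finset.range n, qint (2 * (k : ℤ) + 2 * (a : ℤ) - 2 * (j : ℤ))
def Wp (k a n : ℕ) : Kq := ∏ j ∈ Finset.range n, qint (2 * (k : ℤ) + 2 * (a : ℤ) - 2 * (j : ℤ) + 1)

lemma Np_split (k a n : ℕ) : Np k a n = Xk k n * Xka k a n := by
  rw [Xk, Xka, ← Finset.prod_mul_distrib]; rfl

lemma Wp_ne_zero (k a n : ℕ) (h : n ≤ k + 1) : Wp k a n ≠ 0 := by
  refine Finset.prod_ne_zero_iff.mpr fun j hj => ?_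
  have := Finset.mem_range.mp hj
  exact qint_ne_zero (by omega)

lemma Xk_ne_zero (k n : ℕ) (h : n ≤ k) : Xk k n ≠ 0 := by
  refine Finset.prod_ne_zero_iff.mpr fun j hj => ?_
  have := Finset.mem_range.mp hj
  exact qint_ne_zero (by omega)

lemma Xka_ne_zero (k a n : ℕ) (h : n ≤ k) : Xka k a n ≠ 0 := by
  refine Finset.prod_ne_zero_iff.mpr fun j hj => ?_
  have := Finset.mem_range.mp hj
  exact qint_ne_zero (by omega)

lemma qfact_succ (n : ℕ) : qfact (n + 1) = qfact n * qint ((n : ℤ) + 1) :=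
  Finset.prod_range_succ _ _

lemma qfact_chunk (n j : ℕ) : qfact (n + 2 * j) =
    qfact n * ∏ m ∈ Finset.range j,
      (qint ((n : ℤ) + 2 * (m : ℤ) + 1) * qint ((n : ℤ) + 2 * (m : ℤ) + 2)) := by
  induction j with
  | zero => simp
  | succ j ih =>
    rw [show n + 2 * (j + 1) = n + 2 * j + 1 + 1 from by omega, qfact_succ, qfact_succ, ih,
      Finset.prod_range_succ,
      show ((n + 2 * j : ℕ) : ℤ) + 1 = (n : ℤ) + 2 * (j : ℤ) + 1 from by push_cast; ring,
      show ((n + 2 * j + 1 : ℕ) : ℤ) + 1 = (n : ℤ) + 2 * (j : ℤ) + 2 from by push_cast; ring]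
    ring

lemma qfact_chunk' (k a ℓ : ℕ) (h : ℓ ≤ k) :
    qfact (2 * k + 2 * a + 2) = qfact (2 * k + 2 * a - 2 * ℓ) *
      (Wp k a (ℓ + 1) * (qint (2 * (k : ℤ) + 2 * (a : ℤ) + 2) * Xka k a ℓ)) := by
  rw [show 2 * k + 2 * a + 2 = (2 * k + 2 * a - 2 * ℓ) + 2 * (ℓ + 1) from by omega, qfact_chunk]
  congr 1
  have hc : ((2 * k + 2 * a - 2 * ℓ : ℕ) : ℤ) = 2 * (k : ℤ) + 2 * (a : ℤ) - 2 * (ℓ : ℤ) := by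
    omega
  simp only [hc]
  rw [← Finset.prod_range_reflect]
  have e1 : ∀ j ∈ Finset.range (ℓ + 1),
      qint (2 * (k : ℤ) + 2 * (a : ℤ) - 2 * (ℓ : ℤ) + 2 * ((ℓ + 1 - 1 - j : ℕ) : ℤ) + 1) *
        qint (2 * (k : ℤ) + 2 * (a : ℤ) - 2 * (ℓ : ℤ) + 2 * ((ℓ + 1 - 1 - j : ℕ) : ℤ) + 2) =
      qint (2 * (k : ℤ) + 2 * (a : ℤ) - 2 * (j : ℤ) + 1) *
        qint (2 * (k : ℤ) + 2 * (a : ℤ) - 2 * (j : ℤ) + 2) := by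
    intro j hj
    have hj' : j ≤ ℓ := Nat.lt_succ_iff.mp (Finset.mem_range.mp hj)
    have hcc : ((ℓ + 1 - 1 - j : ℕ) : ℤ) = (ℓ : ℤ) - (j : ℤ) := by omega
    rw [hcc]
    congr 2 <;> ring
  rw [Finset.prod_congr rfl e1, Finset.prod_mul_distrib]
  refine congrArg₂ (· * ·) rfl ?_
  rw [Finset.prod_range_succ' (fun i => qint (2 * (k : ℤ) + 2 * (a : ℤ) - 2 * (i : ℤ) + 2)) ℓ,
    mul_comm]
  refine congrArg₂ (· * ·) ?_ ?_
  · congr 1; try push_cast; try ring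
  · refine Finset.prod_congr rfl fun i _ => ?_
    congr 1; try push_cast; try ring

lemma prod_Icc_one (f : ℕ → Kq) (n : ℕ) :
    ∏ m ∈ Finset.Icc 1 n, f m = ∏ j ∈ Finset.range n, f (j + 1) := by
  induction n with
  | zero => simp
  | succ n ih => rw [Finset.prod_Icc_succ_top (by omega), ih, Finset.prod_range_succ]

lemma sum_Icc_one {M : Type*} [AddCommMonoid M] (f : ℕ → M) (n : ℕ) :
    ∑ m ∈ Finset.Icc 1 n, f m = ∑ j ∈ Finset.range n, f (j + 1) := by
  induction n with
  | zero => simp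
  | succ n ih => rw [Finset.sum_Icc_succ_top (by omega), ih, Finset.sum_range_succ]

lemma conv1 (a j : ℕ) :
    ∏ m ∈ Finset.Icc 1 j, qint (2 * (a : ℤ) - 2 * (m : ℤ) + 2) = Pa a j := by
  rw [prod_Icc_one]
  refine Finset.prod_congr rfl fun i _ => ?_
  congr 1; try push_cast; try ring

lemma conv2 (k a j : ℕ) :
    ∏ m ∈ Finset.Icc 1 (j + 1), qint (2 * (k : ℤ) - 2 * (m : ℤ) + 4) /
      (qint (2 * (k : ℤ) + 2 * (a : ℤ) - 2 * (m : ℤ) + 3) * qint (2 * (m : ℤ))) =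
    qint (2 * (k : ℤ) + 2) * Xk k j / (Wp k a (j + 1) * Mm (j + 1)) := by
  rw [prod_Icc_one, Finset.prod_div_distrib, Finset.prod_mul_distrib]
  refine congrArg₂ (· / ·) ?_ ?_
  · rw [Finset.prod_range_succ' (fun i => qint (2 * (k : ℤ) - 2 * ((i + 1 : ℕ) : ℤ) + 4)) j,
      mul_comm]
    refine congrArg₂ (· * ·) ?_ ?_
    · congr 1; try push_cast; try ring
    · refine Finset.prod_congr rfl fun i _ => ?_
      congr 1; try push_cast; try ring
  · refine congrArg₂ (· * ·) ?_ ?_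
    · rw [Wp]
      refine Finset.prod_congr rfl fun i _ => ?_
      congr 1; try push_cast; try ring
    · rw [Mm]
      refine Finset.prod_congr rfl fun i _ => ?_
      congr 1; try push_cast; try ring
lemma Pa_succ (a j : ℕ) : Pa a (j + 1) = Pa a j * qint (2 * (a : ℤ) - 2 * (j : ℤ)) :=
  Finset.prod_range_succ _ _

lemma Np_succ (k a j : ℕ) : Np k a (j + 1) =
    Np k a j * (qint (2 * (k : ℤ) - 2 * (j : ℤ)) * qint (2 * (k : ℤ) + 2 * (a : ℤ) - 2 * (j : ℤ))) :=
  Finset.prod_range_succ _ _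

lemma Mm_succ (j : ℕ) : Mm (j + 1) = Mm j * qint (2 * (j : ℤ) + 2) :=
  Finset.prod_range_succ _ _


private lemma scalar_aux (f1 f2 F0 M W P X1 X2 q1 q4 q5 q6 q7 q8 Q E : Kq)
    (h1 : f1 ≠ 0) (h2 : f2 ≠ 0) (h3 : F0 ≠ 0) (h4 : M ≠ 0) (h5 : q4 ≠ 0)
    (h6 : q8 ≠ 0) (h7 : q7 ≠ 0) (h8 : W ≠ 0) :
    f1⁻¹ * f2⁻¹ * E * (P * q1 * (X1 * X2 * (q5 * q6)) / (M * q4) + Q ^ 2 * (P * (X1 * X2) / M)) =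
    F0 * (W * (q7 * X2)) / (f1 * f2) * ((q6 * q5 * q1 + Q ^ 2 * q4) / (q7 * q8)) * P *
      (q8 * X1 / (W * (M * q4))) * E * F0⁻¹ := by
  rw [eq_comm, mul_inv_eq_iff_eq_mul₀ h3]
  field_simp

lemma BoddP_odd_eq (ς : Kq) (k : ℕ) :
    BoddP ς (2 * k + 1) = Polynomial.C (qfact (2 * k + 1))⁻¹ * (Polynomial.X * bb ς k) := by
  unfold BoddP
  rw [if_neg (by rw [Nat.even_iff]; omega), show (2 * k + 1) / 2 = k from by omega]
  rfl

lemma BoddP_even_eq (ς : Kq) (n : ℕ) :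
    BoddP ς (2 * n) = Polynomial.C (qfact (2 * n))⁻¹ * bb ς n := by
  unfold BoddP
  rw [if_pos (even_two_mul n), show 2 * n / 2 = n from by omega]
  rfl
/-- Multiplication formula `B_odd^{(2k+1)} B_odd^{(2a+1)}`. -/
theorem Bodd_mul_odd_odd (ς : Kq) (hς : ς ≠ 0) (k a : ℕ) :
    BoddP ς (2 * k + 1) * BoddP ς (2 * a + 1) =
    Polynomial.C (qbinom (2 * k + 2 * a + 2) (2 * k + 1)) *
      (BoddP ς (2 * k + 2 * a + 2) +
        ∑ ℓ ∈ Finset.Icc 1 (k + 1),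
          Polynomial.C ((qint (2 * (k : ℤ) + 2 * (a : ℤ) - 2 * (ℓ : ℤ) + 2) * qint (2 * (k : ℤ) - 2 * (ℓ : ℤ) + 2) *
                  qint (2 * (a : ℤ) - 2 * (ℓ : ℤ) + 2) +
                qint (2 * (k : ℤ) + 2 * (a : ℤ) - 2 * (ℓ : ℤ) + 3) ^ 2 * qint (2 * (ℓ : ℤ))) /
              (qint (2 * (k : ℤ) + 2 * (a : ℤ) + 2) * qint (2 * (k : ℤ) + 2)) *
            (∏ m ∈ Finset.Icc 1 (ℓ - 1), qint (2 * (a : ℤ) - 2 * (m : ℤ) + 2)) *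
            (∏ m ∈ Finset.Icc 1 ℓ,
              qint (2 * (k : ℤ) - 2 * (m : ℤ) + 4) /
                (qint (2 * (k : ℤ) + 2 * (a : ℤ) - 2 * (m : ℤ) + 3) * qint (2 * (m : ℤ)))) *
            (qq * ς) ^ ℓ) *
          BoddP ς (2 * k + 2 * a + 2 - 2 * ℓ)) := by
  have hB2 : BoddP ς (2 * k + 2 * a + 2) =
      Polynomial.C (qfact (2 * k + 2 * a + 2))⁻¹ * bb ς (k + a + 1) := by
    have h := BoddP_even_eq ς (k + a + 1)
    rw [show 2 * (k + a + 1) = 2 * k + 2 * a + 2 from by omega] at h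
    exact h
  rw [BoddP_odd_eq, BoddP_odd_eq, hB2, sum_Icc_one]
  have hL : Polynomial.C (qfact (2 * k + 1))⁻¹ * (Polynomial.X * bb ς k) *
      (Polynomial.C (qfact (2 * a + 1))⁻¹ * (Polynomial.X * bb ς a)) =
      Polynomial.C ((qfact (2 * k + 1))⁻¹ * (qfact (2 * a + 1))⁻¹) *
        ((Polynomial.X : Polynomial Kq) ^ 2 * (bb ς k * bb ς a)) := by
    rw [Polynomial.C_mul]; ring
  rw [hL, bb_master, mul_add, mul_add, Finset.mul_sum, Finset.mul_sum]
  refine congrArg₂ (· + ·) ?_ ?_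
  · rw [← mul_assoc, ← Polynomial.C_mul]
    congr 2
    rw [qbinom, show 2 * k + 2 * a + 2 - (2 * k + 1) = 2 * a + 1 from by omega]
    have h1 : qfact (2 * k + 1) ≠ 0 := qfact_ne_zero _
    have h2 : qfact (2 * a + 1) ≠ 0 := qfact_ne_zero _
    have h3 : qfact (2 * k + 2 * a + 2) ≠ 0 := qfact_ne_zero _
    field_simp
  · refine Finset.sum_congr rfl fun j hj => ?_
    have hjk : j ≤ k := Nat.lt_succ_iff.mp (Finset.mem_range.mp hj)
    rw [show 2 * k + 2 * a + 2 - 2 * (j + 1) = 2 * (k + a - j) from by omega, BoddP_even_eq,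
      show 2 * (k + a - j) = 2 * k + 2 * a - 2 * j from by omega]
    simp only [← mul_assoc, ← Polynomial.C_mul]
    congr 2
    simp only [Nat.cast_add, Nat.cast_one, Nat.add_sub_cancel]
    rw [show 2 * (k : ℤ) + 2 * (a : ℤ) - 2 * ((j : ℤ) + 1) + 2 =
          2 * (k : ℤ) + 2 * (a : ℤ) - 2 * (j : ℤ) from by ring,
        show 2 * (k : ℤ) - 2 * ((j : ℤ) + 1) + 2 = 2 * (k : ℤ) - 2 * (j : ℤ) from by ring,
        show 2 * (a : ℤ) - 2 * ((j : ℤ) + 1) + 2 = 2 * (a : ℤ) - 2 * (j : ℤ) from by ring,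
        show 2 * (k : ℤ) + 2 * (a : ℤ) - 2 * ((j : ℤ) + 1) + 3 =
          2 * (k : ℤ) + 2 * (a : ℤ) - 2 * (j : ℤ) + 1 from by ring,
        show 2 * ((j : ℤ) + 1) = 2 * (j : ℤ) + 2 from by ring]
    rw [conv1, conv2, qbinom, show 2 * k + 2 * a + 2 - (2 * k + 1) = 2 * a + 1 from by omega,
      qfact_chunk' k a j hjk]
    unfold dd
    rw [Pa_succ, Np_succ, Mm_succ, Np_split]
    have h1 : qfact (2 * k + 1) ≠ 0 := qfact_ne_zero _
    have h2 : qfact (2 * a + 1) ≠ 0 := qfact_ne_zero _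
    have h3 : qfact (2 * k + 2 * a - 2 * j) ≠ 0 := qfact_ne_zero _
    have h4 : Mm j ≠ 0 := Mm_ne_zero j
    have h5 : qint (2 * (j : ℤ) + 2) ≠ 0 := qint_ne_zero (by omega)
    have h6 : qint (2 * (k : ℤ) + 2) ≠ 0 := qint_ne_zero (by omega)
    have h7 : qint (2 * (k : ℤ) + 2 * (a : ℤ) + 2) ≠ 0 := qint_ne_zero (by omega)
    have h8 : Wp k a (j + 1) ≠ 0 := Wp_ne_zero k a (j + 1) (by omega)
    exact scalar_aux (qfact (2 * k + 1)) (qfact (2 * a + 1)) (qfact (2 * k + 2 * a - 2 * j))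
      (Mm j) (Wp k a (j + 1)) (Pa a j) (Xk k j) (Xka k a j)
      (qint (2 * (a : ℤ) - 2 * (j : ℤ))) (qint (2 * (j : ℤ) + 2))
      (qint (2 * (k : ℤ) - 2 * (j : ℤ))) (qint (2 * (k : ℤ) + 2 * (a : ℤ) - 2 * (j : ℤ)))
      (qint (2 * (k : ℤ) + 2 * (a : ℤ) + 2)) (qint (2 * (k : ℤ) + 2))
      (qint (2 * (k : ℤ) + 2 * (a : ℤ) - 2 * (j : ℤ) + 1)) ((qq * ς) ^ (j + 1))
      h1 h2 h3 h4 h5 h6 h7 h8
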